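/- arXiv:2104.11625 — 9 statements merged into one kernel-verified Lean document; each statement's English description precedes it below -/
import Mathlib

section
/- Let λ > 1, a* > 1, C ≥ 0 be real numbers, X a topological space, f : X → X continuous, and a, b : X → ℝ continuous functions with a(x) ≥ a* and |b(x)| ≤ C for all x ∈ X. Then the series S(x) := ∑_{i=0}^∞ λ^{−i} b(f^i(x)) ∏_{j=0}^{i} a(f^j(x))⁻¹ converges absolutely and uniformly on X, its sum S is a continuous function, and |S(x)| ≤ C·λa*/(λa* − 1) for every x ∈ X. -/
/-!
Since `a ≥ a* ≥ 1`, the `i`-th term is bounded by `C (λ a*)⁻ⁱ`, a convergent geometric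
series because `λ a* > 1`; the Weierstrass M-test then gives absolute and uniform
convergence and continuity of the sum, and the sum of the majorant is `C λa*/(λa* − 1)`.
-/

open Finset

theorem abs_prod_inv_le_inv_pow {ι : Type*} (t : Finset ι) {c : ι → ℝ} {m : ℝ} (hm : 0 < m)
    (hc : ∀ j ∈ t, m ≤ c j) : |∏ j ∈ t, (c j)⁻¹| ≤ m⁻¹ ^ t.card := by
  rw [Finset.abs_prod, ← Finset.prod_const]
  refine Finset.prod_le_prod (fun _ _ => abs_nonneg _) fun j hj => ?_
  rw [abs_inv, abs_of_pos (hm.trans_le (hc j hj))]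
  exact inv_anti₀ hm (hc j hj)

theorem abs_stable_term_le {lam astar C β : ℝ} {α : ℕ → ℝ} (hlam : 0 < lam) (hastar : 1 ≤ astar)
    (hα : ∀ j, astar ≤ α j) (hβ : |β| ≤ C) (i : ℕ) :
    |lam⁻¹ ^ i * β * ∏ j ∈ range (i + 1), (α j)⁻¹| ≤ C * (lam * astar)⁻¹ ^ i := by
  have hprod : |∏ j ∈ range (i + 1), (α j)⁻¹| ≤ astar⁻¹ ^ i :=
    calc |∏ j ∈ range (i + 1), (α j)⁻¹| ≤ astar⁻¹ ^ (i + 1) := by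
          simpa using abs_prod_inv_le_inv_pow (range (i + 1)) (by positivity) fun j _ => hα j
      _ ≤ astar⁻¹ ^ i :=
          pow_le_pow_of_le_one (by positivity) (inv_le_one_of_one_le₀ hastar) i.le_succ
  calc |lam⁻¹ ^ i * β * ∏ j ∈ range (i + 1), (α j)⁻¹|
      = lam⁻¹ ^ i * |β| * |∏ j ∈ range (i + 1), (α j)⁻¹| := by
        rw [abs_mul, abs_mul, abs_pow, abs_inv, abs_of_pos hlam]
    _ ≤ lam⁻¹ ^ i * C * astar⁻¹ ^ i := by
        have hC : 0 ≤ C := (abs_nonneg β).trans hβ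
        gcongr
    _ = C * (lam * astar)⁻¹ ^ i := by rw [mul_inv, mul_pow]; ring

theorem hasSum_mul_inv_pow {q : ℝ} (hq : 1 < q) (C : ℝ) :
    HasSum (fun i => C * q⁻¹ ^ i) (C * q / (q - 1)) := by
  have h := (hasSum_geometric_of_lt_one (by positivity) (inv_lt_one_of_one_lt₀ hq)).mul_left C
  have hq1 : q - 1 ≠ 0 := sub_ne_zero.2 hq.ne'
  rwa [show (1 - q⁻¹)⁻¹ = q / (q - 1) by field_simp, ← mul_div_assoc] at h

theorem continuous_stable_term {X : Type*} [TopologicalSpace X] {f : X → X} {a b : X → ℝ}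
    (hf : Continuous f) (ha : Continuous a) (hb : Continuous b) (ha0 : ∀ x, a x ≠ 0)
    (lam : ℝ) (i : ℕ) :
    Continuous fun x => lam⁻¹ ^ i * b (f^[i] x) * ∏ j ∈ range (i + 1), (a (f^[j] x))⁻¹ :=
  (continuous_const.mul (hb.comp (hf.iterate i))).mul <|
    continuous_finsetProd _ fun j _ => (ha.comp (hf.iterate j)).inv₀ fun _ => ha0 _

theorem stable_series_converges_general {X : Type*} [TopologicalSpace X]
    (lam astar C : ℝ) (hlam : 1 < lam) (hastar : 1 < astar)
    (f : X → X) (hf : Continuous f)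
    (a b : X → ℝ) (ha_cont : Continuous a) (hb_cont : Continuous b)
    (ha : ∀ x, astar ≤ a x) (hb : ∀ x, |b x| ≤ C)
    (s : ℕ → X → ℝ)
    (hs : ∀ i x, s i x =
      (lam⁻¹) ^ i * b (f^[i] x) * ∏ j ∈ Finset.range (i + 1), (a (f^[j] x))⁻¹)
    (S : X → ℝ) (hS : ∀ x, S x = ∑' i, s i x) :
    (∀ x, Summable (fun i => |s i x|)) ∧
    TendstoUniformly (fun n x => ∑ i ∈ Finset.range n, s i x) S Filter.atTop ∧
    Continuous S ∧
    (∀ x, |S x| ≤ C * (lam * astar) / (lam * astar - 1)) := by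
  have hbound : ∀ i x, ‖s i x‖ ≤ C * (lam * astar)⁻¹ ^ i := fun i x =>
    (hs i x).symm ▸ abs_stable_term_le (by positivity) hastar.le (fun _ => ha _) (hb _) i
  have hu := hasSum_mul_inv_pow (one_lt_mul_of_lt_of_le hlam hastar.le) C
  have hcont : ∀ i, Continuous (s i) := fun i => by
    simpa only [← funext (hs i)] using continuous_stable_term hf ha_cont hb_cont
      (fun x => ((one_pos.trans hastar).trans_le (ha x)).ne') lam i
  obtain rfl : S = fun x => ∑' i, s i x := funext hS
  exact ⟨fun x => hu.summable.of_nonneg_of_le (fun i => abs_nonneg _) (hbound · x),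
    tendstoUniformly_tsum_nat hu.summable hbound, continuous_tsum hcont hu.summable hbound,
    fun x => tsum_of_norm_bounded hu (hbound · x)⟩

/-- Under `λ > 1`, `a ≥ a* > 1`, `|b| ≤ C`, the stable series
`S(x) = ∑_{i=0}^∞ λ^{−i} b(f^i(x)) ∏_{j=0}^{i} a(f^j(x))⁻¹` converges absolutely,
its partial sums converge uniformly on `X`, the sum `S` is continuous, and
`|S(x)| ≤ C·λa*/(λa* − 1)`. -/
theorem stable_series_converges {X : Type*} [TopologicalSpace X]
    (lam astar C : ℝ) (hlam : 1 < lam) (hastar : 1 < astar) (hC : 0 ≤ C)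
    (f : X → X) (hf : Continuous f)
    (a b : X → ℝ) (ha_cont : Continuous a) (hb_cont : Continuous b)
    (ha : ∀ x, astar ≤ a x) (hb : ∀ x, |b x| ≤ C)
    (s : ℕ → X → ℝ)
    (hs : ∀ i x, s i x =
      (lam⁻¹) ^ i * b (f^[i] x) * ∏ j ∈ Finset.range (i + 1), (a (f^[j] x))⁻¹)
    (S : X → ℝ) (hS : ∀ x, S x = ∑' i, s i x) :
    (∀ x, Summable (fun i => |s i x|)) ∧
    TendstoUniformly (fun n x => ∑ i ∈ Finset.range n, s i x) S Filter.atTop ∧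
    Continuous S ∧
    (∀ x, |S x| ≤ C * (lam * astar) / (lam * astar - 1)) :=
  stable_series_converges_general lam astar C hlam hastar f hf a b ha_cont hb_cont ha hb s hs S hS
end

section
/- Let λ > 1, a* > 1, C ≥ 0 be real numbers, X a set, f : X → X, and a, b : X → ℝ functions with a(x) ≥ a* and |b(x)| ≤ C for all x ∈ X, and let S(x) := ∑_{i=0}^∞ λ^{−i} b(f^i(x)) ∏_{j=0}^{i} a(f^j(x))⁻¹ (the series converges absolutely). Then for every x ∈ X one has a(x)·S(x) − b(x) = λ⁻¹·S(f(x)). Equivalently, writing M(x) for the matrix [[a(x), b(x)], [0, λ⁻¹]] and w(x) := (−S(x), 1) ∈ ℝ², one has M(x)·w(x) = λ⁻¹·w(f(x)), and consequently for every n ≥ 1, M(f^{n−1}(x))···M(f(x))·M(x)·w(x) = λ^{−n}·w(f^n(x)). -/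
/-!
The terms of the stable series are dominated by the geometric series `C a*⁻¹ (λ a*)⁻ⁱ`.
Splitting off the term `i = 0` and using `f^[i+1] x = f^[i] (f x)` gives
`S x = b x / a x + (λ a x)⁻¹ S (f x)`, which is the invariance equation; in matrix form it reads
`M x *ᵥ w x = λ⁻¹ • w (f x)`, and iterating it along the orbit of `x` gives the cocycle identity.
-/

open Finset Matrix

section StableSeries

variable {X 𝕜 : Type*} [NormedField 𝕜] (lam : 𝕜) (f : X → X) (a b : X → 𝕜)

def stableTerm (x : X) (i : ℕ) : 𝕜 :=
  lam⁻¹ ^ i * b (f^[i] x) * ∏ j ∈ range (i + 1), (a (f^[j] x))⁻¹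

noncomputable def stableSeries (x : X) : 𝕜 :=
  ∑' i, stableTerm lam f a b x i

theorem stableTerm_zero (x : X) : stableTerm lam f a b x 0 = b x * (a x)⁻¹ := by
  simp [stableTerm]

theorem stableTerm_succ (x : X) (i : ℕ) :
    stableTerm lam f a b x (i + 1) = lam⁻¹ * (a x)⁻¹ * stableTerm lam f a b (f x) i := by
  simp only [stableTerm, prod_range_succ' _ (i + 1), Function.iterate_succ_apply,
    Function.iterate_zero_apply]
  ring

variable {lam f a b}

theorem norm_stableTerm_le {astar C : ℝ} (hastar : 0 < astar) (ha : ∀ x, astar ≤ ‖a x‖)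
    (hb : ∀ x, ‖b x‖ ≤ C) (x : X) (i : ℕ) :
    ‖stableTerm lam f a b x i‖ ≤ C * astar⁻¹ * (‖lam‖⁻¹ * astar⁻¹) ^ i := by
  have hprod : ∏ j ∈ range (i + 1), ‖a (f^[j] x)‖⁻¹ ≤ astar⁻¹ ^ (i + 1) := by
    calc ∏ j ∈ range (i + 1), ‖a (f^[j] x)‖⁻¹ ≤ ∏ j ∈ range (i + 1), astar⁻¹ :=
          prod_le_prod (fun j _ => inv_nonneg.2 (norm_nonneg _))
            (fun j _ => inv_anti₀ hastar (ha (f^[j] x)))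
      _ = astar⁻¹ ^ (i + 1) := by rw [prod_const, card_range]
  calc ‖stableTerm lam f a b x i‖
      = ‖lam‖⁻¹ ^ i * ‖b (f^[i] x)‖ * ∏ j ∈ range (i + 1), ‖a (f^[j] x)‖⁻¹ := by
        simp [stableTerm, norm_prod]
    _ ≤ ‖lam‖⁻¹ ^ i * C * astar⁻¹ ^ (i + 1) := by
        gcongr
        · exact mul_nonneg (by positivity) ((norm_nonneg _).trans (hb x))
        · exact hb _
    _ = C * astar⁻¹ * (‖lam‖⁻¹ * astar⁻¹) ^ i := by ring

theorem summable_norm_stableTerm {astar C : ℝ} (hlam : 1 < ‖lam‖) (hastar : 1 < astar)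
    (ha : ∀ x, astar ≤ ‖a x‖) (hb : ∀ x, ‖b x‖ ≤ C) (x : X) :
    Summable fun i => ‖stableTerm lam f a b x i‖ := by
  have hratio : ‖lam‖⁻¹ * astar⁻¹ < 1 :=
    mul_lt_one_of_nonneg_of_lt_one_left (by positivity) (inv_lt_one_of_one_lt₀ hlam)
      (inv_le_one_of_one_le₀ hastar.le)
  exact .of_nonneg_of_le (fun _ => norm_nonneg _)
    (norm_stableTerm_le (by positivity) ha hb x)
    ((summable_geometric_of_lt_one (by positivity) hratio).mul_left _)

theorem mul_stableSeries_sub_eq (x : X) (hsum : Summable (stableTerm lam f a b x)) (hax : a x ≠ 0) :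
    a x * stableSeries lam f a b x - b x = lam⁻¹ * stableSeries lam f a b (f x) := by
  rw [stableSeries, hsum.tsum_eq_zero_add, stableTerm_zero]
  simp only [stableTerm_succ, tsum_mul_left, stableSeries]
  field_simp
  ring

end StableSeries

section Cocycle

variable {X R n : Type*} [CommRing R] [Fintype n] [DecidableEq n]

def matrixCocycle (M : X → Matrix n n R) (f : X → X) (k : ℕ) (x : X) : Matrix n n R :=
  ((List.range k).reverse.map fun i => M (f^[i] x)).prod

theorem matrixCocycle_mulVec_of_mulVec_eq_smul {M : X → Matrix n n R} {f : X → X}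
    {w : X → n → R} {c : R} (hMw : ∀ x, M x *ᵥ w x = c • w (f x)) (k : ℕ) (x : X) :
    matrixCocycle M f k x *ᵥ w x = c ^ k • w (f^[k] x) := by
  induction k with
  | zero => simp [matrixCocycle]
  | succ k ih =>
    simp only [matrixCocycle, List.range_succ, List.reverse_append, List.reverse_singleton,
      List.map_cons, List.singleton_append, List.prod_cons] at ih ⊢
    rw [← Matrix.mulVec_mulVec, ih, Matrix.mulVec_smul, hMw, smul_smul, pow_succ,
      Function.iterate_succ_apply']

end Cocycle

theorem upperTriangular_mulVec_eq_smul {R : Type*} [CommRing R] {p q c s t : R}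
    (h : p * s - q = c * t) : !![p, q; 0, c] *ᵥ ![-s, 1] = c • ![-t, 1] := by
  ext i
  fin_cases i <;> simp [Matrix.mulVec, dotProduct, Fin.sum_univ_two, ← h]
  ring

theorem stable_series_invariance_general {X : Type*}
    (lam astar C : ℝ) (hlam : 1 < lam) (hastar : 1 < astar)
    (f : X → X) (a b : X → ℝ)
    (ha : ∀ x, astar ≤ a x) (hb : ∀ x, |b x| ≤ C)
    (S : X → ℝ)
    (hS : ∀ x, S x = ∑' i,
      (lam⁻¹) ^ i * b (f^[i] x) * ∏ j ∈ Finset.range (i + 1), (a (f^[j] x))⁻¹)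
    (M : X → Matrix (Fin 2) (Fin 2) ℝ)
    (hM : ∀ x, M x = !![a x, b x; 0, lam⁻¹])
    (w : X → Fin 2 → ℝ) (hw : ∀ x, w x = ![-S x, 1]) :
    (∀ x, Summable (fun i =>
      |(lam⁻¹) ^ i * b (f^[i] x) * ∏ j ∈ Finset.range (i + 1), (a (f^[j] x))⁻¹|)) ∧
    (∀ x, a x * S x - b x = lam⁻¹ * S (f x)) ∧
    (∀ x, (M x).mulVec (w x) = lam⁻¹ • w (f x)) ∧
    (∀ x, ∀ n : ℕ, 1 ≤ n →
      (((List.range n).reverse.map (fun i => M (f^[i] x))).prod).mulVec (w x)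
        = (lam⁻¹) ^ n • w (f^[n] x)) := by
  have hS : S = stableSeries lam f a b := funext hS
  subst hS
  have hsum (x : X) : Summable fun i => |stableTerm lam f a b x i| := by
    simpa only [Real.norm_eq_abs] using summable_norm_stableTerm (lam := lam) (f := f)
      (by rwa [Real.norm_of_nonneg (by linarith)]) hastar
      (fun x => (ha x).trans (le_abs_self _)) (by simpa only [Real.norm_eq_abs] using hb) x
  have hinv (x : X) : a x * stableSeries lam f a b x - b x =
      lam⁻¹ * stableSeries lam f a b (f x) :=
    mul_stableSeries_sub_eq x (hsum x).of_abs (by linarith [ha x])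
  have hMw (x : X) : M x *ᵥ w x = lam⁻¹ • w (f x) := by
    rw [hM, hw, hw]
    exact upperTriangular_mulVec_eq_smul (hinv x)
  exact ⟨hsum, hinv, hMw, fun x n _ => matrixCocycle_mulVec_of_mulVec_eq_smul hMw n x⟩

/-- The stable series `S` satisfies the invariance equation
`a(x)·S(x) − b(x) = λ⁻¹·S(f(x))`; equivalently, with `M(x) = [[a x, b x],[0, λ⁻¹]]`
and `w(x) = (−S(x), 1)`, one has `M(x)·w(x) = λ⁻¹·w(f(x))`, and for every `n ≥ 1`
the cocycle product contracts: `M(f^{n−1}x)···M(x)·w(x) = λ^{−n}·w(f^n x)`. -/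
theorem stable_series_invariance {X : Type*}
    (lam astar C : ℝ) (hlam : 1 < lam) (hastar : 1 < astar) (hC : 0 ≤ C)
    (f : X → X) (a b : X → ℝ)
    (ha : ∀ x, astar ≤ a x) (hb : ∀ x, |b x| ≤ C)
    (S : X → ℝ)
    (hS : ∀ x, S x = ∑' i,
      (lam⁻¹) ^ i * b (f^[i] x) * ∏ j ∈ Finset.range (i + 1), (a (f^[j] x))⁻¹)
    (M : X → Matrix (Fin 2) (Fin 2) ℝ)
    (hM : ∀ x, M x = !![a x, b x; 0, lam⁻¹])
    (w : X → Fin 2 → ℝ) (hw : ∀ x, w x = ![-S x, 1]) :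
    (∀ x, Summable (fun i =>
      |(lam⁻¹) ^ i * b (f^[i] x) * ∏ j ∈ Finset.range (i + 1), (a (f^[j] x))⁻¹|)) ∧
    (∀ x, a x * S x - b x = lam⁻¹ * S (f x)) ∧
    (∀ x, (M x).mulVec (w x) = lam⁻¹ • w (f x)) ∧
    (∀ x, ∀ n : ℕ, 1 ≤ n →
      (((List.range n).reverse.map (fun i => M (f^[i] x))).prod).mulVec (w x)
        = (lam⁻¹) ^ n • w (f^[n] x)) :=
  stable_series_invariance_general lam astar C hlam hastar f a b ha hb S hS M hM w hw
end

section
/- Let λ > 0 and a* > 0 be real numbers with λ·a* > 1, let X be a set, f : X → X a map, and a : X → ℝ a function with a(x) ≥ a* for all x. If D : X → ℝ is a bounded function satisfying a(x)·D(x) = λ⁻¹·D(f(x)) for every x ∈ X, then D is identically zero. -/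
/-! Along an orbit the equation gives `|D (f y)| = λ |a y| |D y| ≥ λ a* |D y|`, so `|D|` grows at
least like `(λ a*)ⁿ` along every orbit; a bounded `D` therefore vanishes. -/

open Filter Function Set

theorem pow_mul_le_iterate_of_mul_le {X : Type*} {c : ℝ} (hc : 0 ≤ c) {f : X → X} {u : X → ℝ}
    (hexp : ∀ y, c * u y ≤ u (f y)) (n : ℕ) (x : X) : c ^ n * u x ≤ u (f^[n] x) := by
  induction n with
  | zero => simp
  | succ n ih =>
    calc c ^ (n + 1) * u x = c * (c ^ n * u x) := by ring
      _ ≤ c * u (f^[n] x) := mul_le_mul_of_nonneg_left ih hc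
      _ ≤ u (f^[n + 1] x) := by rw [iterate_succ_apply']; exact hexp _

theorem nonpos_of_expanding_of_bddAbove {X : Type*} {c : ℝ} (hc : 1 < c) {f : X → X}
    {u : X → ℝ} (hu : BddAbove (range u)) (hexp : ∀ y, c * u y ≤ u (f y)) (x : X) :
    u x ≤ 0 := by
  obtain ⟨M, hM⟩ := hu
  by_contra! hx
  have hgrowth : Tendsto (fun n : ℕ => c ^ n * u x) atTop atTop :=
    (tendsto_pow_atTop_atTop_of_one_lt hc).atTop_mul_const hx
  obtain ⟨n, hn⟩ := (hgrowth.eventually_gt_atTop M).exists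
  have hbound : u (f^[n] x) ≤ M := hM (mem_range_self _)
  linarith [pow_mul_le_iterate_of_mul_le (by linarith) hexp n x]

theorem bounded_cohomological_solution_zero_general {X : Type*}
    (lam astar : ℝ) (hlam : 0 < lam) (h1 : 1 < lam * astar)
    (f : X → X) (a : X → ℝ) (ha : ∀ x, astar ≤ a x)
    (D : X → ℝ) (hD_bdd : ∃ M : ℝ, ∀ x, |D x| ≤ M)
    (hD : ∀ x, a x * D x = lam⁻¹ * D (f x)) :
    ∀ x, D x = 0 := by
  have hexp : ∀ y, lam * astar * |D y| ≤ |D (f y)| := fun y => by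
    have hDf : D (f y) = lam * (a y * D y) := by
      rw [hD y, ← mul_assoc, mul_inv_cancel₀ hlam.ne', one_mul]
    rw [hDf, abs_mul, abs_mul, abs_of_pos hlam, mul_assoc]
    gcongr
    exact (ha y).trans (le_abs_self _)
  have hbdd : BddAbove (range fun x => |D x|) := by
    obtain ⟨M, hM⟩ := hD_bdd
    exact ⟨M, forall_mem_range.2 hM⟩
  exact fun x => abs_nonpos_iff.1 (nonpos_of_expanding_of_bddAbove h1 hbdd hexp x)

/-- If `λ > 0`, `a* > 0` with `λ·a* > 1`, `a(x) ≥ a*` for all `x`,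
and `D` is a bounded function satisfying the cohomological equation
`a(x)·D(x) = λ⁻¹·D(f(x))`, then `D ≡ 0`. -/
theorem bounded_cohomological_solution_zero {X : Type*}
    (lam astar : ℝ) (hlam : 0 < lam) (hastar : 0 < astar) (h1 : 1 < lam * astar)
    (f : X → X) (a : X → ℝ) (ha : ∀ x, astar ≤ a x)
    (D : X → ℝ) (hD_bdd : ∃ M : ℝ, ∀ x, |D x| ≤ M)
    (hD : ∀ x, a x * D x = lam⁻¹ * D (f x)) :
    ∀ x, D x = 0 :=
  bounded_cohomological_solution_zero_general lam astar hlam h1 f a ha D hD_bdd hD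
end

section
/- Let λ > 1 and a* > 1 be real numbers, P a topological space, X a compact metric space, F : P × X → X a continuous map (write f_p := F(p, ·)), and a, b : P × X → ℝ continuous functions with a(p, x) ≥ a* for all (p, x). Then the function (p, x) ↦ S_p(x) := ∑_{i=0}^∞ λ^{−i} b(p, f_p^i(x)) ∏_{j=0}^{i} a(p, f_p^j(x))⁻¹ is continuous on P × X. -/
/-!
Each term of the series is continuous in `(p, x)`, being built from `F`, `a` and `b` by
composition, products and inverses. Since `a ≥ 1`, the `i`-th term is bounded by
`λ⁻ⁱ sup |b|`, and by compactness of `X` the supremum of `|b(p, ·)|` stays bounded for `p`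
near any `p₀`. The Weierstrass M-test on these neighbourhoods gives local uniform convergence,
hence continuity of the sum.
-/

open Filter Topology Finset

theorem continuous_tsum_of_eventually_norm_le {α E : Type*} [TopologicalSpace α]
    [NormedAddCommGroup E] [CompleteSpace E] {f : ℕ → α → E} (hf : ∀ n, Continuous (f n))
    (hbound : ∀ x₀, ∃ u : ℕ → ℝ, Summable u ∧ ∀ᶠ x in 𝓝 x₀, ∀ n, ‖f n x‖ ≤ u n) :
    Continuous fun x => ∑' n, f n x := by
  refine continuous_iff_continuousAt.2 fun x₀ => ?_
  obtain ⟨u, hu, hfu⟩ := hbound x₀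
  have hon : ContinuousOn (fun x => ∑' n, f n x) {x | ∀ n, ‖f n x‖ ≤ u n} :=
    continuousOn_tsum (fun n => (hf n).continuousOn) hu fun n _ hx => hx n
  exact hon.continuousAt hfu

section StableSeries

variable {P X : Type*}

def fiberIterate (F : P × X → X) (n : ℕ) (q : P × X) : X :=
  (fun y => F (q.1, y))^[n] q.2

/-- `r` stands for `λ⁻¹`. -/
noncomputable def stableSeriesTerm (F : P × X → X) (a b : P × X → ℝ) (r : ℝ) (i : ℕ)
    (q : P × X) : ℝ :=
  r ^ i * b (q.1, fiberIterate F i q) *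
    ∏ j ∈ range (i + 1), (a (q.1, fiberIterate F j q))⁻¹

theorem norm_stableSeriesTerm_le {F : P × X → X} {a b : P × X → ℝ} (ha : ∀ q, 1 ≤ a q)
    {r : ℝ} (hr : 0 ≤ r) {C : ℝ} (i : ℕ) {q : P × X} (hb : |b (q.1, fiberIterate F i q)| ≤ C) :
    ‖stableSeriesTerm F a b r i q‖ ≤ C * r ^ i := by
  have hprod : |∏ j ∈ range (i + 1), (a (q.1, fiberIterate F j q))⁻¹| ≤ 1 := by
    rw [abs_prod]
    refine prod_le_one (fun _ _ => abs_nonneg _) fun j _ => ?_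
    rw [abs_inv, abs_of_pos (zero_lt_one.trans_le (ha _))]
    exact inv_le_one_of_one_le₀ (ha _)
  have hC : 0 ≤ C := (abs_nonneg _).trans hb
  rw [stableSeriesTerm, Real.norm_eq_abs, abs_mul, abs_mul, abs_pow, abs_of_nonneg hr]
  calc _ ≤ r ^ i * C * 1 := by gcongr
    _ = C * r ^ i := by ring

variable [TopologicalSpace P] [TopologicalSpace X]

theorem continuous_fiberIterate {F : P × X → X} (hF : Continuous F) (n : ℕ) :
    Continuous (fiberIterate F n) := by
  induction n with
  | zero => exact continuous_snd
  | succ n ih =>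
    have hstep : fiberIterate F (n + 1) = fun q => F (q.1, fiberIterate F n q) := by
      funext q
      exact Function.iterate_succ_apply' _ n q.2
    rw [hstep]
    exact hF.comp (continuous_fst.prodMk ih)

theorem continuous_stableSeriesTerm {F : P × X → X} {a b : P × X → ℝ} (hF : Continuous F)
    (ha : Continuous a) (hb : Continuous b) (ha₀ : ∀ q, a q ≠ 0) (r : ℝ) (i : ℕ) :
    Continuous (stableSeriesTerm F a b r i) := by
  have hpair : ∀ n, Continuous fun q : P × X => (q.1, fiberIterate F n q) := fun n =>
    continuous_fst.prodMk (continuous_fiberIterate hF n)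
  refine (continuous_const.mul (hb.comp (hpair i))).mul ?_
  exact continuous_finsetProd _ fun j _ => (ha.comp (hpair j)).inv₀ fun q => ha₀ _

theorem Continuous.exists_eventually_forall_abs_le [CompactSpace X] {g : P × X → ℝ}
    (hg : Continuous g) (p₀ : P) : ∃ C, ∀ᶠ p in 𝓝 p₀, ∀ x, |g (p, x)| ≤ C := by
  obtain ⟨C, hC⟩ := (isCompact_univ.image (hg.comp (Continuous.prodMk_right p₀)).abs).bddAbove
  refine ⟨C + 1, ?_⟩
  have hnear : ∀ x ∈ (Set.univ : Set X), ∀ᶠ q : P × X in 𝓝 (p₀, x), |g (q.1, q.2)| < C + 1 :=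
    fun x _ => hg.abs.continuousAt.eventually_lt continuousAt_const
      ((hC ⟨x, trivial, rfl⟩).trans_lt (lt_add_one C))
  filter_upwards [isCompact_univ.eventually_forall_of_forall_eventually
    (P := fun p x => |g (p, x)| < C + 1) hnear] with p hp x
  exact (hp x trivial).le

theorem continuous_tsum_stableSeriesTerm [CompactSpace X] {F : P × X → X} {a b : P × X → ℝ}
    (hF : Continuous F) (ha : Continuous a) (hb : Continuous b) (ha₁ : ∀ q, 1 ≤ a q)
    {r : ℝ} (hr₀ : 0 ≤ r) (hr₁ : r < 1) :
    Continuous fun q => ∑' i, stableSeriesTerm F a b r i q := by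
  refine continuous_tsum_of_eventually_norm_le
    (continuous_stableSeriesTerm hF ha hb (fun q => (zero_lt_one.trans_le (ha₁ q)).ne') r)
    fun q₀ => ?_
  obtain ⟨C, hC⟩ := hb.exists_eventually_forall_abs_le q₀.1
  refine ⟨fun i => C * r ^ i, (summable_geometric_of_lt_one hr₀ hr₁).mul_left C, ?_⟩
  filter_upwards [continuous_fst.continuousAt.eventually hC] with q hq i
  exact norm_stableSeriesTerm_le ha₁ hr₀ i (hq _)

end StableSeries

/-- Joint continuity of the stable series in the parameter:
if `λ > 1`, `a* > 1`, `P` is a topological space, `X` a compact metric space,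
`F : P × X → X` continuous (with `f_p = F(p, ·)`), `a, b : P × X → ℝ` continuous
with `a ≥ a*`, then `(p, x) ↦ S_p(x) = ∑_{i=0}^∞ λ^{−i} b(p, f_p^i(x))
∏_{j=0}^{i} a(p, f_p^j(x))⁻¹` is continuous on `P × X`. -/
theorem stable_series_continuous_in_parameter {P X : Type*}
    [TopologicalSpace P] [MetricSpace X] [CompactSpace X]
    (lam astar : ℝ) (hlam : 1 < lam) (hastar : 1 < astar)
    (F : P × X → X) (hF : Continuous F)
    (a b : P × X → ℝ) (ha_cont : Continuous a) (hb_cont : Continuous b)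
    (ha : ∀ p x, astar ≤ a (p, x))
    (S : P × X → ℝ)
    (hS : ∀ p x, S (p, x) = ∑' i,
      (lam⁻¹) ^ i * b (p, (fun y => F (p, y))^[i] x) *
        ∏ j ∈ Finset.range (i + 1), (a (p, (fun y => F (p, y))^[j] x))⁻¹) :
    Continuous S := by
  have hS_eq : S = fun q => ∑' i, stableSeriesTerm F a b lam⁻¹ i q := by
    funext ⟨p, x⟩
    exact hS p x
  rw [hS_eq]
  exact continuous_tsum_stableSeriesTerm hF ha_cont hb_cont
    (fun q => hastar.le.trans (ha q.1 q.2)) (by positivity) (inv_lt_one_of_one_lt₀ hlam)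
end

section
/- Let X be a measurable space and μ̃ a measure on X × ℝ (with the product σ-algebra, ℝ carrying the Borel σ-algebra) such that for every s ∈ ℝ the translation map (x, t) ↦ (x, t + s) is measure-preserving for μ̃. Define the measure ν on X by ν(A) := μ̃(A × [0, 1)). If ν is σ-finite, then μ̃ equals the product measure ν ⊗ Leb, where Leb denotes Lebesgue measure on ℝ. -/
open MeasureTheory Measure Set
open scoped ENNReal

/-! For measurable `A ⊆ X`, the measure `C ↦ μ (A ×ˢ C)` on `ℝ` is translation invariant. If it
gives finite mass to `[0, 1)`, it is finite on every interval of length one, hence locally finite,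
and uniqueness of Haar measure makes it `ν A • volume`. So `μ` and `ν.prod volume` agree on
rectangles whose base has finite `ν`-measure, and by σ-finiteness of `ν` these determine a measure
on `X × ℝ`. -/

lemma measure_Ico_add_one (ρ : Measure ℝ) [ρ.IsAddLeftInvariant] (a : ℝ) :
    ρ (Ico a (a + 1)) = ρ (Ico 0 1) := by
  rw [← measure_preimage_add ρ a, preimage_const_add_Ico, sub_self, add_sub_cancel_left]

lemma isLocallyFiniteMeasure_of_measure_Ico_ne_top (ρ : Measure ℝ) [ρ.IsAddLeftInvariant]
    (h : ρ (Ico 0 1) ≠ ∞) : IsLocallyFiniteMeasure ρ where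
  finiteAtNhds x := ⟨Ico (x - 1 / 2) (x - 1 / 2 + 1), Ico_mem_nhds (by linarith) (by linarith),
    by rw [measure_Ico_add_one]; exact h.lt_top⟩

lemma eq_measure_Ico_smul_volume (ρ : Measure ℝ) [ρ.IsAddLeftInvariant]
    (h : ρ (Ico 0 1) ≠ ∞) : ρ = ρ (Ico 0 1) • volume := by
  have := isLocallyFiniteMeasure_of_measure_Ico_ne_top ρ h
  have hρ := isAddLeftInvariant_eq_smul ρ volume
  have hc : ρ (Ico 0 1) = addHaarScalarFactor ρ volume := by
    conv_lhs => rw [hρ]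
    simp
  rw [hc]
  exact hρ

lemma prod_eq_of_measure_ne_top {α β : Type*} [MeasurableSpace α] [MeasurableSpace β]
    {μ : Measure α} [SigmaFinite μ] {ν : Measure β} [SigmaFinite ν] {μν : Measure (α × β)}
    (h : ∀ s t, MeasurableSet s → μ s ≠ ∞ → MeasurableSet t → μν (s ×ˢ t) = μ s * ν t) :
    μ.prod ν = μν := by
  refine ext_of_iUnion_eq_univ (s := fun n ↦ spanningSets μ n ×ˢ univ)
    (by rw [← iUnion_prod_const, iUnion_spanningSets, univ_prod_univ]) fun n ↦ ?_
  rw [← prod_restrict, restrict_univ]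
  refine prod_eq fun s t hs ht ↦ ?_
  have hsn_fin : μ (s ∩ spanningSets μ n) ≠ ∞ :=
    (measure_inter_lt_top_of_right_ne_top (measure_spanningSets_lt_top μ n).ne).ne
  rw [restrict_apply hs, restrict_apply (hs.prod ht), prod_inter_prod, inter_univ]
  exact h _ _ (hs.inter (measurableSet_spanningSets μ n)) hsn_fin ht

section TranslationInvariant

variable {X : Type*} [MeasurableSpace X] {μ : Measure (X × ℝ)}

lemma map_snd_restrict_fst_preimage_apply (A : Set X) {B : Set ℝ} (hB : MeasurableSet B) :
    (μ.restrict (Prod.fst ⁻¹' A)).map Prod.snd B = μ (A ×ˢ B) := by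
  rw [map_apply measurable_snd hB, restrict_apply (measurable_snd hB), prod_eq, inter_comm]

lemma isAddLeftInvariant_map_snd_restrict
    (hinv : ∀ s : ℝ, MeasurePreserving (fun p : X × ℝ => (p.1, p.2 + s)) μ μ)
    {A : Set X} (hA : MeasurableSet A) :
    ((μ.restrict (Prod.fst ⁻¹' A)).map Prod.snd).IsAddLeftInvariant where
  map_add_left_eq_self c := by
    ext B hB
    rw [map_apply (measurable_const_add c) hB, map_snd_restrict_fst_preimage_apply A hB,
      map_snd_restrict_fst_preimage_apply A (measurable_const_add c hB),
      ← (hinv c).measure_preimage (hA.prod hB).nullMeasurableSet]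
    congr 1
    ext p
    simp [add_comm]

lemma measure_prod_eq_measure_prod_Ico_mul_volume
    (hinv : ∀ s : ℝ, MeasurePreserving (fun p : X × ℝ => (p.1, p.2 + s)) μ μ)
    {A : Set X} (hA : MeasurableSet A) (hA_fin : μ (A ×ˢ Ico 0 1) ≠ ∞)
    {B : Set ℝ} (hB : MeasurableSet B) :
    μ (A ×ˢ B) = μ (A ×ˢ Ico 0 1) * volume B := by
  have := isAddLeftInvariant_map_snd_restrict hinv hA
  rw [← map_snd_restrict_fst_preimage_apply A measurableSet_Ico] at hA_fin ⊢
  rw [← map_snd_restrict_fst_preimage_apply A hB]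
  conv_lhs => rw [eq_measure_Ico_smul_volume _ hA_fin]
  rw [Measure.smul_apply, smul_eq_mul]

end TranslationInvariant

/-- A measure on `X × ℝ` invariant under all vertical translations
`(x, t) ↦ (x, t + s)` is the product of the base measure `ν(A) = μ̃(A × [0, 1))`
with Lebesgue measure, provided `ν` is σ-finite. -/
theorem translation_invariant_measure_is_product {X : Type*} [MeasurableSpace X]
    (μ : Measure (X × ℝ))
    (hinv : ∀ s : ℝ, MeasurePreserving (fun p : X × ℝ => (p.1, p.2 + s)) μ μ)
    (ν : Measure X)
    (hν : ∀ A : Set X, MeasurableSet A → ν A = μ (A ×ˢ Set.Ico (0 : ℝ) 1))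
    [SigmaFinite ν] :
    μ = ν.prod volume := by
  refine (prod_eq_of_measure_ne_top fun A B hA hA_fin hB ↦ ?_).symm
  rw [hν A hA] at hA_fin ⊢
  exact measure_prod_eq_measure_prod_Ico_mul_volume hinv hA hA_fin hB
end

section
/- Let X and Y be compact metric spaces with their Borel σ-algebras, T : X → X and T₀ : Y → Y Borel measurable maps, and h : X → Y a continuous surjection with h ∘ T = T₀ ∘ h. Assume: (i) there is a countable set C ⊆ X such that h restricted to X \ C is injective; (ii) T₀ has exactly one invariant Borel probability measure ν₀; (iii) ν₀ has no atoms. Then T has at most one invariant Borel probability measure. -/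
open MeasureTheory

/-!
Any `T`-invariant probability measure `μ` pushes forward under `h` to a `T₀`-invariant one,
so `μ.map h = ν₀`. Since `ν₀` is atomless, `μ` gives no mass to `h⁻¹(h(C))`, off which `h`
is injective. By the Lusin–Souslin theorem `h` maps Borel sets injectively onto Borel sets
there, so `μ A = ν₀ (h (A \ h⁻¹(h(C))))` and `μ` is determined by `ν₀`.
-/

theorem Function.Semiconj.map_map_eq_of_map_eq {X Y : Type*} [MeasurableSpace X]
    [MeasurableSpace Y] {T : X → X} {T₀ : Y → Y} {h : X → Y} (hsemi : Function.Semiconj h T T₀)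
    (hT : Measurable T) (hT₀ : Measurable T₀) (hh : Measurable h) {μ : Measure X}
    (hμ : μ.map T = μ) : (μ.map h).map T₀ = μ.map h := by
  rw [Measure.map_map hT₀ hh, ← hsemi.comp_eq, ← Measure.map_map hh hT, hμ]

theorem MeasureTheory.Measure.ext_of_map_eq_of_injOn {X Y : Type*} [MeasurableSpace X]
    [StandardBorelSpace X] [MeasurableSpace Y] [MeasurableSpace.CountablySeparated Y]
    {h : X → Y} (hh : Measurable h) {s : Set X} (hs : MeasurableSet s) (hinj : s.InjOn h)
    {μ₁ μ₂ : Measure X} (h₁ : μ₁ sᶜ = 0) (h₂ : μ₂ sᶜ = 0) (hmap : μ₁.map h = μ₂.map h) :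
    μ₁ = μ₂ := by
  ext A hA
  have hsA : MeasurableSet (h '' (A ∩ s)) :=
    (hA.inter hs).image_of_measurable_injOn hh (hinj.mono Set.inter_subset_right)
  have hpre : h ⁻¹' (h '' (A ∩ s)) ∩ s = A ∩ s := hinj.preimage_image_inter Set.inter_subset_right
  calc μ₁ A = μ₁ (A ∩ s) := (measure_inter_conull h₁).symm
    _ = μ₁ (h ⁻¹' (h '' (A ∩ s))) := (congrArg μ₁ hpre).symm.trans (measure_inter_conull h₁)
    _ = μ₂ (h ⁻¹' (h '' (A ∩ s))) := by
      rw [← Measure.map_apply hh hsA, hmap, Measure.map_apply hh hsA]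
    _ = μ₂ (A ∩ s) := (measure_inter_conull h₂).symm.trans (congrArg μ₂ hpre)
    _ = μ₂ A := measure_inter_conull h₂

theorem unique_ergodicity_transfers_general {X Y : Type*}
    [MetricSpace X] [CompactSpace X] [MeasurableSpace X] [BorelSpace X]
    [MetricSpace Y] [CompactSpace Y] [MeasurableSpace Y] [BorelSpace Y]
    (T : X → X) (hT : Measurable T) (T₀ : Y → Y) (hT₀ : Measurable T₀)
    (h : X → Y) (hh_cont : Continuous h)
    (hsemi : ∀ x, h (T x) = T₀ (h x))
    (C : Set X) (hC : C.Countable) (hinj : Set.InjOn h Cᶜ)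
    (ν₀ : Measure Y) [IsProbabilityMeasure ν₀]
    (huniq : ∀ ρ : Measure Y, IsProbabilityMeasure ρ → ρ.map T₀ = ρ → ρ = ν₀)
    (hatomless : ∀ y : Y, ν₀ {y} = 0) :
    ∀ μ₁ μ₂ : Measure X, IsProbabilityMeasure μ₁ → μ₁.map T = μ₁ →
      IsProbabilityMeasure μ₂ → μ₂.map T = μ₂ → μ₁ = μ₂ := by
  have hh : Measurable h := hh_cont.measurable
  have hmap : ∀ μ : Measure X, IsProbabilityMeasure μ → μ.map T = μ → μ.map h = ν₀ :=
    fun μ _ hμ => huniq _ (Measure.isProbabilityMeasure_map hh.aemeasurable)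
      (Function.Semiconj.map_map_eq_of_map_eq hsemi hT hT₀ hh hμ)
  have : NullSingletonClass ν₀ := ⟨hatomless⟩
  have hnull : ∀ μ : Measure X, μ.map h = ν₀ → μ (h ⁻¹' (h '' C)) = 0 := fun μ hμ => by
    rw [← Measure.map_apply hh (hC.image h).measurableSet, hμ]
    exact (hC.image h).measure_zero ν₀
  have hinj' : (h ⁻¹' (h '' C))ᶜ.InjOn h :=
    hinj.mono (Set.compl_subset_compl.mpr (Set.subset_preimage_image h C))
  intro μ₁ μ₂ hμ₁ hinv₁ hμ₂ hinv₂
  refine Measure.ext_of_map_eq_of_injOn hh (hh (hC.image h).measurableSet).compl hinj' ?_ ?_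
    ((hmap μ₁ hμ₁ hinv₁).trans (hmap μ₂ hμ₂ hinv₂).symm)
  · rw [compl_compl]; exact hnull μ₁ (hmap μ₁ hμ₁ hinv₁)
  · rw [compl_compl]; exact hnull μ₂ (hmap μ₂ hμ₂ hinv₂)

/-- Transfer of unique ergodicity through a semi-conjugacy which is
injective off a countable set: if `h : X → Y` is a continuous surjection with
`h ∘ T = T₀ ∘ h`, injective outside a countable set `C`, and `T₀` has a unique
invariant Borel probability measure `ν₀` which is atomless, then `T` has at most one
invariant Borel probability measure. -/
theorem unique_ergodicity_transfers {X Y : Type*}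
    [MetricSpace X] [CompactSpace X] [MeasurableSpace X] [BorelSpace X]
    [MetricSpace Y] [CompactSpace Y] [MeasurableSpace Y] [BorelSpace Y]
    (T : X → X) (hT : Measurable T) (T₀ : Y → Y) (hT₀ : Measurable T₀)
    (h : X → Y) (hh_cont : Continuous h) (hh_surj : Function.Surjective h)
    (hsemi : ∀ x, h (T x) = T₀ (h x))
    (C : Set X) (hC : C.Countable) (hinj : Set.InjOn h Cᶜ)
    (ν₀ : Measure Y) [IsProbabilityMeasure ν₀] (hν₀ : ν₀.map T₀ = ν₀)
    (huniq : ∀ ρ : Measure Y, IsProbabilityMeasure ρ → ρ.map T₀ = ρ → ρ = ν₀)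
    (hatomless : ∀ y : Y, ν₀ {y} = 0) :
    ∀ μ₁ μ₂ : Measure X, IsProbabilityMeasure μ₁ → μ₁.map T = μ₁ →
      IsProbabilityMeasure μ₂ → μ₂.map T = μ₂ → μ₁ = μ₂ :=
  unique_ergodicity_transfers_general T hT T₀ hT₀ h hh_cont hsemi C hC hinj ν₀ huniq hatomless
end

section
/- Let a < b and c < d be real numbers, I = [a, b], J = [c, d]. Let T : I → I be a map, T₀ : J → J a map, and h : I → J a continuous, nondecreasing surjection with h(T(x)) = T₀(h(x)) for all x ∈ I. Let S ⊆ I be a set on which h is injective. Assume that every forward T₀-orbit tail is dense in J: for every y ∈ J and every N ∈ ℕ, the set {T₀^n(y) : n ≥ N} is dense in J. Then for every x ∈ I and every z ∈ I which is an accumulation point of S (every open interval containing z contains a point of S different from z), z belongs to the ω-limit set of x under T: for every ε > 0 and every N ∈ ℕ there exists n ≥ N with |T^n(x) − z| < ε. -/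
/-!
Two points `s₁ < s₂` of `S` close to `z` have distinct images `h s₁ < h s₂`, since `h` is
injective on `S`. The `T₀`-orbit of `h x` enters the open interval `(h s₁, h s₂)` at arbitrarily
late times `n`; as `h (Tⁿ x) = T₀ⁿ (h x)` and `h` is nondecreasing, `Tⁿ x` then lies between
`s₁` and `s₂`, hence close to `z`.
-/

open Set

theorem iterate_apply_eq_of_semiconjOn {α β : Type*} {s : Set α} {T : α → α} {T₀ : β → β}
    {h : α → β} (hT : MapsTo T s s) (hsemi : ∀ x ∈ s, h (T x) = T₀ (h x)) (n : ℕ) {x : α}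
    (hx : x ∈ s) : h (T^[n] x) = T₀^[n] (h x) := by
  induction n with
  | zero => rfl
  | succ n ih =>
    rw [Function.iterate_succ_apply', Function.iterate_succ_apply', hsemi _ (hT.iterate n hx), ih]

theorem exists_lt_of_forall_exists_mem_Ioo_ne {α : Type*} [LinearOrder α] {S : Set α} {z u v : α}
    (hacc : ∀ u v, u < z → z < v → ∃ s ∈ S, s ∈ Ioo u v ∧ s ≠ z) (hu : u < z) (hv : z < v) :
    ∃ s₁ ∈ S, ∃ s₂ ∈ S, s₁ < s₂ ∧ u < s₁ ∧ s₂ < v := by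
  obtain ⟨s, hsS, ⟨hus, hsv⟩, hsz⟩ := hacc u v hu hv
  rcases hsz.lt_or_gt with hsz | hzs
  · obtain ⟨s', hs'S, ⟨hss', hs'v⟩, -⟩ := hacc s v hsz hv
    exact ⟨s, hsS, s', hs'S, hss', hus, hs'v⟩
  · obtain ⟨s', hs'S, ⟨hus', hs's⟩, -⟩ := hacc u s hu hzs
    exact ⟨s', hs'S, s, hsS, hs's, hus', hsv⟩

theorem exists_ge_mem_Ioo_of_forall_exists_ge_abs_sub_lt {u : ℕ → ℝ} {N : ℕ} {p q : ℝ}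
    (hpq : p < q) (happrox : ∀ ε > 0, ∃ n ≥ N, |u n - (p + q) / 2| < ε) :
    ∃ n ≥ N, u n ∈ Ioo p q := by
  obtain ⟨n, hnN, hn⟩ := happrox ((q - p) / 2) (by linarith)
  rw [abs_lt] at hn
  exact ⟨n, hnN, by linarith [hn.1], by linarith [hn.2]⟩

theorem MonotoneOn.mem_Ioo_of_apply_mem_Ioo {α β : Type*} [LinearOrder α] [Preorder β]
    {s : Set α} {f : α → β} (hf : MonotoneOn f s) {a b t : α} (ha : a ∈ s) (hb : b ∈ s)
    (ht : t ∈ s) (hft : f t ∈ Ioo (f a) (f b)) : t ∈ Ioo a b :=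
  ⟨hf.reflect_lt ha ht hft.1, hf.reflect_lt ht hb hft.2⟩

theorem accumulation_points_in_omega_limit_general
    (a b c d : ℝ)
    (T : ℝ → ℝ) (hT : Set.MapsTo T (Set.Icc a b) (Set.Icc a b))
    (T₀ : ℝ → ℝ)
    (h : ℝ → ℝ)
    (hmono : MonotoneOn h (Set.Icc a b))
    (hsurj : h '' Set.Icc a b = Set.Icc c d)
    (hsemi : ∀ x ∈ Set.Icc a b, h (T x) = T₀ (h x))
    (S : Set ℝ) (hS : S ⊆ Set.Icc a b) (hinj : Set.InjOn h S)
    (hdense : ∀ y ∈ Set.Icc c d, ∀ N : ℕ, ∀ z ∈ Set.Icc c d, ∀ ε > (0 : ℝ),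
      ∃ n ≥ N, |T₀^[n] y - z| < ε) :
    ∀ x ∈ Set.Icc a b, ∀ z ∈ Set.Icc a b,
      (∀ u v : ℝ, u < z → z < v → ∃ s ∈ S, s ∈ Set.Ioo u v ∧ s ≠ z) →
      ∀ ε > (0 : ℝ), ∀ N : ℕ, ∃ n ≥ N, |T^[n] x - z| < ε := by
  intro x hx z _ hacc ε hε N
  have hmapsTo : MapsTo h (Icc a b) (Icc c d) := hsurj ▸ mapsTo_image h (Icc a b)
  obtain ⟨s₁, hs₁, s₂, hs₂, hs₁₂, hzs₁, hs₂z⟩ :=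
    exists_lt_of_forall_exists_mem_Ioo_ne hacc (sub_lt_self z hε) (lt_add_of_pos_right z hε)
  have hhs₁₂ : h s₁ < h s₂ := ((hmono.mono hS).strictMonoOn_of_injOn hinj) hs₁ hs₂ hs₁₂
  have hmid : (h s₁ + h s₂) / 2 ∈ Icc c d :=
    (ordConnected_Icc.out (hmapsTo (hS hs₁)) (hmapsTo (hS hs₂)))
      ⟨by linarith, by linarith⟩
  obtain ⟨n, hnN, hn⟩ := exists_ge_mem_Ioo_of_forall_exists_ge_abs_sub_lt hhs₁₂
    (hdense (h x) (hmapsTo hx) N _ hmid)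
  rw [← iterate_apply_eq_of_semiconjOn hT hsemi n hx] at hn
  have hTn := hmono.mem_Ioo_of_apply_mem_Ioo (hS hs₁) (hS hs₂) (hT.iterate n hx) hn
  exact ⟨n, hnN, abs_sub_lt_iff.2 ⟨by linarith [hTn.2], by linarith [hTn.1]⟩⟩

/-- Let `T : I → I`, `T₀ : J → J` with `I = [a,b]`, `J = [c,d]`,
`h : I → J` a continuous nondecreasing surjection semi-conjugating `T` to `T₀`,
injective on `S ⊆ I`. If every forward `T₀`-orbit tail is dense in `J`, then every
accumulation point `z` of `S` belongs to the ω-limit set of every point `x ∈ I`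
under `T`. -/
theorem accumulation_points_in_omega_limit
    (a b c d : ℝ) (hab : a < b) (hcd : c < d)
    (T : ℝ → ℝ) (hT : Set.MapsTo T (Set.Icc a b) (Set.Icc a b))
    (T₀ : ℝ → ℝ) (hT₀ : Set.MapsTo T₀ (Set.Icc c d) (Set.Icc c d))
    (h : ℝ → ℝ) (hcont : ContinuousOn h (Set.Icc a b))
    (hmono : MonotoneOn h (Set.Icc a b))
    (hsurj : h '' Set.Icc a b = Set.Icc c d)
    (hsemi : ∀ x ∈ Set.Icc a b, h (T x) = T₀ (h x))
    (S : Set ℝ) (hS : S ⊆ Set.Icc a b) (hinj : Set.InjOn h S)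
    (hdense : ∀ y ∈ Set.Icc c d, ∀ N : ℕ, ∀ z ∈ Set.Icc c d, ∀ ε > (0 : ℝ),
      ∃ n ≥ N, |T₀^[n] y - z| < ε) :
    ∀ x ∈ Set.Icc a b, ∀ z ∈ Set.Icc a b,
      (∀ u v : ℝ, u < z → z < v → ∃ s ∈ S, s ∈ Set.Ioo u v ∧ s ≠ z) →
      ∀ ε > (0 : ℝ), ∀ N : ℕ, ∃ n ≥ N, |T^[n] x - z| < ε :=
  accumulation_points_in_omega_limit_general a b c d T hT T₀ h hmono hsurj hsemi S hS hinj hdense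
end

section
/- Let λ > 1, −λ < β ≤ 0 and α > 0 be real numbers, and let k : ℝ → ℝ be a continuously differentiable even function with k(t) = 0 for |t| ≥ 1, 0 ≤ k ≤ 1 everywhere, and k nonincreasing on [0, ∞). Define F : ℝ² → ℝ² by F(x, y) := ((λ + β·k(‖(x, y)‖/α))·x, λ⁻¹·y), where ‖·‖ is the Euclidean norm. Then F is a bijection of ℝ², and a homeomorphism of ℝ². -/
/-!
`F` maps each horizontal line `y = const` onto the line `y = λ⁻¹ · const`, by `x ↦ c(x) · x`
with a coefficient `c ≥ λ + β > 0` that is nondecreasing in `|x|` (since `β ≤ 0` and `k` is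
nonincreasing on `[0, ∞)`). Such a map is strictly increasing and tends to `±∞`, so `F` is
bijective. Moreover `‖F p‖ ≥ min (λ + β) λ⁻¹ · ‖p‖`, so `F` is proper, hence closed, and a
closed continuous bijection is a homeomorphism.
-/

open Filter Function

theorem isHomeomorph_of_mul_norm_le {E F : Type*} [NormedAddCommGroup E] [ProperSpace E]
    [NormedAddCommGroup F] {f : E → F} (hf : Continuous f) (hbij : Bijective f) {m : ℝ}
    (hm : 0 < m) (hle : ∀ x, m * ‖x‖ ≤ ‖f x‖) : IsHomeomorph f := by
  have hproper : IsProperMap f := by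
    refine isProperMap_iff_tendsto_cocompact.mpr
      ⟨hf, tendsto_cocompact_of_tendsto_dist_comp_atTop 0 ?_⟩
    simp only [dist_zero_right]
    exact tendsto_atTop_mono hle (tendsto_norm_cocompact_atTop.const_mul_atTop hm)
  exact isHomeomorph_iff_continuous_isClosedMap_bijective.mpr ⟨hf, hproper.isClosedMap, hbij⟩

theorem strictMono_mul_id_of_abs_le {c : ℝ → ℝ} (hpos : ∀ x, 0 < c x)
    (hmono : ∀ x x', |x| ≤ |x'| → c x ≤ c x') : StrictMono fun x => c x * x := by
  intro x x' hlt
  rcases le_or_gt 0 x with hx | hx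
  · have : c x ≤ c x' :=
      hmono x x' (by rw [abs_of_nonneg hx, abs_of_pos (hx.trans_lt hlt)]; exact hlt.le)
    calc c x * x ≤ c x' * x := mul_le_mul_of_nonneg_right this hx
      _ < c x' * x' := mul_lt_mul_of_pos_left hlt (hpos x')
  rcases le_or_gt x' 0 with hx' | hx'
  · have : c x' ≤ c x := hmono x' x (by rw [abs_of_nonpos hx', abs_of_neg hx]; linarith)
    calc c x * x < c x * x' := mul_lt_mul_of_pos_left hlt (hpos x)
      _ ≤ c x' * x' := mul_le_mul_of_nonpos_right this hx'
  · exact (mul_neg_of_pos_of_neg (hpos x) hx).trans (mul_pos (hpos x') hx')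

theorem surjective_mul_id_of_le {c : ℝ → ℝ} (hc : Continuous c) {m : ℝ} (hm : 0 < m)
    (hcm : ∀ x, m ≤ c x) : Surjective fun x => c x * x := by
  refine (hc.mul continuous_id).surjective ?_ ?_
  · refine tendsto_atTop_mono' atTop ?_ (tendsto_id.const_mul_atTop hm)
    filter_upwards [eventually_ge_atTop 0] with x hx
    exact mul_le_mul_of_nonneg_right (hcm x) hx
  · refine tendsto_atBot_mono' atBot ?_ (tendsto_id.const_mul_atBot hm)
    filter_upwards [eventually_le_atBot 0] with x hx
    exact mul_le_mul_of_nonpos_right (hcm x) hx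

theorem bijective_prodMk_of_bijective_fiber {α β γ δ : Type*} {g : β → α → γ} {h : β → δ}
    (hg : ∀ y, Bijective (g y)) (hh : Bijective h) :
    Bijective fun p : α × β => (g p.2 p.1, h p.2) := by
  refine ⟨fun p q hpq => ?_, fun ⟨u, v⟩ => ?_⟩
  · obtain ⟨h1, h2⟩ := Prod.mk.inj hpq
    have hy := hh.injective h2
    rw [hy] at h1
    exact Prod.ext ((hg q.2).injective h1) hy
  · obtain ⟨y, rfl⟩ := hh.surjective v
    obtain ⟨x, rfl⟩ := (hg y).surjective u
    exact ⟨(x, y), rfl⟩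

theorem min_mul_norm_le_norm_mul_prodMk (a b x y : ℝ) :
    min |a| |b| * ‖(x, y)‖ ≤ ‖(a * x, b * y)‖ := by
  simp only [Prod.norm_def, Real.norm_eq_abs, abs_mul]
  rw [mul_max_of_nonneg _ _ (le_min (abs_nonneg a) (abs_nonneg b))]
  exact max_le_max (mul_le_mul_of_nonneg_right (min_le_left _ _) (abs_nonneg x))
    (mul_le_mul_of_nonneg_right (min_le_right _ _) (abs_nonneg y))

theorem perturbed_saddle_is_homeomorphism_general
    (lam β α : ℝ) (hβ1 : -lam < β) (hβ2 : β ≤ 0) (hα : 0 < α)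
    (k : ℝ → ℝ) (hk_diff : ContDiff ℝ 1 k)
    (hk_le : ∀ t, k t ≤ 1)
    (hk_anti : AntitoneOn k (Set.Ici 0))
    (F : ℝ × ℝ → ℝ × ℝ)
    (hF : ∀ p : ℝ × ℝ,
      F p = ((lam + β * k (Real.sqrt (p.1 ^ 2 + p.2 ^ 2) / α)) * p.1, lam⁻¹ * p.2)) :
    Function.Bijective F ∧ ∃ H : (ℝ × ℝ) ≃ₜ (ℝ × ℝ), ∀ p, H p = F p := by
  have hlam : 0 < lam := by linarith
  have hk : Continuous k := hk_diff.continuous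
  set c : ℝ → ℝ → ℝ := fun y x => lam + β * k (Real.sqrt (x ^ 2 + y ^ 2) / α)
  have hc_ge (y x : ℝ) : lam + β ≤ c y x := by
    nlinarith [hk_le (Real.sqrt (x ^ 2 + y ^ 2) / α)]
  have hc_mono (y x x' : ℝ) (hx : |x| ≤ |x'|) : c y x ≤ c y x' := by
    have hsq : x ^ 2 ≤ x' ^ 2 := sq_le_sq.mpr hx
    have hk_le' : k (Real.sqrt (x' ^ 2 + y ^ 2) / α) ≤ k (Real.sqrt (x ^ 2 + y ^ 2) / α) :=
      hk_anti (Set.mem_Ici.mpr (by positivity)) (Set.mem_Ici.mpr (by positivity)) (by gcongr)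
    exact add_le_add_right (mul_le_mul_of_nonpos_left hk_le' hβ2) _
  obtain rfl : F = fun p => (c p.2 p.1 * p.1, lam⁻¹ * p.2) := funext hF
  have hbij : Bijective fun p : ℝ × ℝ => (c p.2 p.1 * p.1, lam⁻¹ * p.2) :=
    bijective_prodMk_of_bijective_fiber
      (fun y => ⟨(strictMono_mul_id_of_abs_le (fun x => by linarith [hc_ge y x])
        (hc_mono y)).injective, surjective_mul_id_of_le (by fun_prop) (by linarith) (hc_ge y)⟩)
      (Equiv.mulLeft₀ lam⁻¹ (inv_ne_zero hlam.ne')).bijective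
  have hle (p : ℝ × ℝ) : min (lam + β) lam⁻¹ * ‖p‖ ≤ ‖(c p.2 p.1 * p.1, lam⁻¹ * p.2)‖ := by
    refine le_trans ?_ (min_mul_norm_le_norm_mul_prodMk _ _ p.1 p.2)
    gcongr
    · exact (hc_ge _ _).trans (le_abs_self _)
    · exact le_abs_self _
  have hH := isHomeomorph_of_mul_norm_le (by fun_prop) hbij
    (lt_min (by linarith) (by positivity)) hle
  exact ⟨hbij, hH.homeomorph _, fun _ => rfl⟩

/-- The local model of the perturbed pseudo-Anosov map,
`F(x, y) = ((λ + β·k(‖(x,y)‖/α))·x, λ⁻¹·y)` with `λ > 1`, `−λ < β ≤ 0`, `α > 0`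
and `k` a `C¹` even bump function supported in `[−1, 1]`, `0 ≤ k ≤ 1`,
nonincreasing on `[0, ∞)`, is a bijection of `ℝ²` and a homeomorphism. -/
theorem perturbed_saddle_is_homeomorphism
    (lam β α : ℝ) (hlam : 1 < lam) (hβ1 : -lam < β) (hβ2 : β ≤ 0) (hα : 0 < α)
    (k : ℝ → ℝ) (hk_diff : ContDiff ℝ 1 k) (hk_even : ∀ t, k (-t) = k t)
    (hk_supp : ∀ t, 1 ≤ |t| → k t = 0)
    (hk_nonneg : ∀ t, 0 ≤ k t) (hk_le : ∀ t, k t ≤ 1)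
    (hk_anti : AntitoneOn k (Set.Ici 0))
    (F : ℝ × ℝ → ℝ × ℝ)
    (hF : ∀ p : ℝ × ℝ,
      F p = ((lam + β * k (Real.sqrt (p.1 ^ 2 + p.2 ^ 2) / α)) * p.1, lam⁻¹ * p.2)) :
    Function.Bijective F ∧ ∃ H : (ℝ × ℝ) ≃ₜ (ℝ × ℝ), ∀ p, H p = F p :=
  perturbed_saddle_is_homeomorphism_general lam β α hβ1 hβ2 hα k hk_diff hk_le hk_anti F hF
end

section
/- Let λ > 1, β ∈ (−λ, 1 − λ) and α > 0 be real numbers, and let k : ℝ → ℝ be a continuous even function with k(0) = 1, k(t) = 0 for |t| ≥ 1, 0 ≤ k ≤ 1 everywhere, and k nonincreasing on [0, ∞). Define h : [0, ∞) → ℝ by h(t) := (λ + β·k(t/α))·t and F : ℝ² → ℝ² by F(x, y) := ((λ + β·k(‖(x, y)‖/α))·x, λ⁻¹·y), where ‖·‖ is the Euclidean norm. Then: (i) the set {t ∈ (0, α] : h(t) = t} is nonempty and has a least element t₀, and t₀ < α; (ii) for every z ∈ ℝ² with 0 < ‖z‖ < t₀ one has ‖F(z)‖ < ‖z‖; (iii)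 for every z ∈ ℝ² with ‖z‖ < t₀, the iterates F^n(z) converge to the origin as n → ∞. -/
/-!
Write `F(x, y) = (g(‖(x, y)‖)·x, λ⁻¹·y)` with the radial gain `g(t) = λ + β·k(t/α)`, so that
`h(t) = g(t)·t` and the positive fixed points of `h` are the solutions of `g(t) = 1`.
Since `β < 0` and `k` decreases on `[0, ∞)`, `g` is continuous and nondecreasing there, with
`g(0) = λ + β < 1 < λ = g(α)`; the first crossing `t₀` of the level `1` lies in `(0, α)`, and
`g < 1` on `[0, t₀)`. On the disc of radius `r < t₀` both coordinates of `F` are therefore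
scaled by at most `max (g r) λ⁻¹ < 1`, so that disc is mapped into itself and contracted
geometrically towards the origin.
-/

open Set Filter Topology

theorem exists_first_crossing {g : ℝ → ℝ} {a b c : ℝ} (hab : a ≤ b)
    (hg : ContinuousOn g (Icc a b)) (ha : g a < c) (hb : c < g b) :
    ∃ t₀ ∈ Ioo a b, g t₀ = c ∧ ∀ t ∈ Ico a t₀, g t < c := by
  set S := Icc a b ∩ g ⁻¹' {c}
  have hS_closed : IsClosed S := hg.preimage_isClosed_of_isClosed isClosed_Icc isClosed_singleton
  have hS_ne : S.Nonempty := intermediate_value_Icc hab hg ⟨ha.le, hb.le⟩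
  obtain ⟨⟨⟨hat₀, ht₀b⟩, hgt₀ : g (sInf S) = c⟩, hleast⟩ :=
    hS_closed.isLeast_csInf hS_ne ⟨a, fun t ht => ht.1.1⟩
  refine ⟨sInf S, ⟨hat₀.lt_of_ne ?_, ht₀b.lt_of_ne ?_⟩, hgt₀, fun t ⟨hat, htt₀⟩ => ?_⟩
  · exact ne_of_apply_ne g (hgt₀ ▸ ha.ne)
  · exact ne_of_apply_ne g (hgt₀ ▸ hb.ne)
  by_contra! hct
  obtain ⟨s, ⟨has, hst⟩, hgs⟩ :=
    intermediate_value_Icc hat (hg.mono (Icc_subset_Icc_right (htt₀.le.trans ht₀b)))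
      ⟨ha.le, hct⟩
  exact (hleast ⟨⟨has, hst.trans (htt₀.le.trans ht₀b)⟩, hgs⟩).not_gt (hst.trans_lt htt₀)

theorem sqrt_mul_sq_add_mul_sq_le {a b c x y : ℝ} (ha : |a| ≤ c) (hb : |b| ≤ c) :
    √((a * x) ^ 2 + (b * y) ^ 2) ≤ c * √(x ^ 2 + y ^ 2) := by
  have hc : 0 ≤ c := (abs_nonneg a).trans ha
  rw [← Real.sqrt_sq hc, ← Real.sqrt_mul (sq_nonneg c)]
  apply Real.sqrt_le_sqrt
  have ha2 : a ^ 2 ≤ c ^ 2 := sq_le_sq' (abs_le.1 ha).1 (abs_le.1 ha).2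
  have hb2 : b ^ 2 ≤ c ^ 2 := sq_le_sq' (abs_le.1 hb).1 (abs_le.1 hb).2
  nlinarith [sq_nonneg x, sq_nonneg y]

theorem sqrt_mul_sq_add_mul_sq_le_of_monotoneOn {g : ℝ → ℝ} (hg₀ : ∀ t, 0 ≤ g t)
    (hg : MonotoneOn g (Ici 0)) {μ r x y : ℝ} (hμ : 0 ≤ μ) (hr : √(x ^ 2 + y ^ 2) ≤ r) :
    √((g √(x ^ 2 + y ^ 2) * x) ^ 2 + (μ * y) ^ 2) ≤ max (g r) μ * √(x ^ 2 + y ^ 2) := by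
  have hρ := Real.sqrt_nonneg (x ^ 2 + y ^ 2)
  refine sqrt_mul_sq_add_mul_sq_le ?_ ?_
  · rw [abs_of_nonneg (hg₀ _)]
    exact le_max_of_le_left (hg hρ (hρ.trans hr) hr)
  · rw [abs_of_nonneg hμ]
    exact le_max_right _ _

theorem Prod.norm_le_sqrt_sq_add_sq (p : ℝ × ℝ) : ‖p‖ ≤ √(p.1 ^ 2 + p.2 ^ 2) :=
  max_le (Real.abs_le_sqrt (le_add_of_nonneg_right (sq_nonneg _)))
    (Real.abs_le_sqrt (le_add_of_nonneg_left (sq_nonneg _)))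

section Iterate

variable {X : Type*} {f : X → X} {N : X → ℝ} {C R : ℝ}

theorem iterate_le_pow_mul_of_contractOn (hC₀ : 0 ≤ C) (hC₁ : C ≤ 1)
    (hf : ∀ x, N x ≤ R → N (f x) ≤ C * N x) {z : X} (hz₀ : 0 ≤ N z) (hz : N z ≤ R) (n : ℕ) :
    N (f^[n] z) ≤ C ^ n * N z := by
  induction n with
  | zero => simp
  | succ n ih =>
    have hR : N (f^[n] z) ≤ R :=
      ih.trans <| (mul_le_of_le_one_left hz₀ (pow_le_one₀ hC₀ hC₁)).trans hz
    calc N (f^[n + 1] z) = N (f (f^[n] z)) := by rw [Function.iterate_succ_apply']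
      _ ≤ C * N (f^[n] z) := hf _ hR
      _ ≤ C * (C ^ n * N z) := mul_le_mul_of_nonneg_left ih hC₀
      _ = C ^ (n + 1) * N z := by ring

theorem tendsto_iterate_zero_of_contractOn {E : Type*} [SeminormedAddCommGroup E] {f : E → E}
    {N : E → ℝ} (hN : ∀ x, ‖x‖ ≤ N x) (hC₀ : 0 ≤ C) (hC₁ : C < 1)
    (hf : ∀ x, N x ≤ R → N (f x) ≤ C * N x) {z : E} (hz : N z ≤ R) :
    Tendsto (fun n => f^[n] z) atTop (𝓝 0) := by
  have hgeom : Tendsto (fun n : ℕ => C ^ n * N z) atTop (𝓝 0) := by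
    simpa using (tendsto_pow_atTop_nhds_zero_of_lt_one hC₀ hC₁).mul_const (N z)
  rw [tendsto_zero_iff_norm_tendsto_zero]
  exact squeeze_zero (fun _ => norm_nonneg _)
    (fun n => (hN _).trans (iterate_le_pow_mul_of_contractOn hC₀ hC₁.le hf
      ((norm_nonneg z).trans (hN z)) hz n)) hgeom

end Iterate

noncomputable def radialGain (lam β α : ℝ) (k : ℝ → ℝ) (t : ℝ) : ℝ :=
  lam + β * k (t / α)

section RadialGain

variable {lam β α : ℝ} {k : ℝ → ℝ}

theorem continuous_radialGain (hk : Continuous k) : Continuous (radialGain lam β α k) := by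
  unfold radialGain
  fun_prop

theorem radialGain_zero (hk0 : k 0 = 1) : radialGain lam β α k 0 = lam + β := by
  simp [radialGain, hk0]

theorem radialGain_self (hα : α ≠ 0) (hk1 : k 1 = 0) : radialGain lam β α k α = lam := by
  simp [radialGain, div_self hα, hk1]

theorem radialGain_nonneg (hβ : -lam ≤ β) (hβ₀ : β ≤ 0) (hk_le : ∀ t, k t ≤ 1) (t : ℝ) :
    0 ≤ radialGain lam β α k t := by
  have : β * 1 ≤ β * k (t / α) := mul_le_mul_of_nonpos_left (hk_le _) hβ₀
  unfold radialGain
  linarith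

theorem radialGain_monotoneOn (hβ₀ : β ≤ 0) (hα : 0 ≤ α) (hk : AntitoneOn k (Ici 0)) :
    MonotoneOn (radialGain lam β α k) (Ici 0) := by
  intro s hs t ht hst
  have hks : k (t / α) ≤ k (s / α) :=
    hk (div_nonneg hs hα) (div_nonneg ht hα) (div_le_div_of_nonneg_right hst hα)
  unfold radialGain
  nlinarith

end RadialGain

theorem attracting_fixed_point_local_model_general
    (lam β α : ℝ) (hlam : 1 < lam) (hβ : β ∈ Set.Ioo (-lam) (1 - lam)) (hα : 0 < α)
    (k : ℝ → ℝ) (hk_cont : Continuous k) (hk0 : k 0 = 1)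
    (hk_supp : ∀ t, 1 ≤ |t| → k t = 0)
    (hk_le : ∀ t, k t ≤ 1)
    (hk_anti : AntitoneOn k (Set.Ici 0))
    (h : ℝ → ℝ) (hh : ∀ t, h t = (lam + β * k (t / α)) * t)
    (F : ℝ × ℝ → ℝ × ℝ)
    (hF : ∀ p : ℝ × ℝ,
      F p = ((lam + β * k (Real.sqrt (p.1 ^ 2 + p.2 ^ 2) / α)) * p.1, lam⁻¹ * p.2))
    (nrm : ℝ × ℝ → ℝ) (hnrm : ∀ p : ℝ × ℝ, nrm p = Real.sqrt (p.1 ^ 2 + p.2 ^ 2)) :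
    ∃ t₀ : ℝ, IsLeast {t ∈ Set.Ioc 0 α | h t = t} t₀ ∧ t₀ < α ∧
      (∀ z : ℝ × ℝ, 0 < nrm z → nrm z < t₀ → nrm (F z) < nrm z) ∧
      (∀ z : ℝ × ℝ, nrm z < t₀ →
        Filter.Tendsto (fun m : ℕ => F^[m] z) Filter.atTop (nhds (0, 0))) := by
  obtain ⟨hβl, hβu⟩ := hβ
  have hg_nonneg := radialGain_nonneg (α := α) hβl.le (by linarith) hk_le
  have hg_mono := radialGain_monotoneOn (lam := lam) (by linarith : β ≤ 0) hα.le hk_anti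
  have hg₀ : radialGain lam β α k 0 < 1 := by rw [radialGain_zero hk0]; linarith
  have hgα : 1 < radialGain lam β α k α := by
    rwa [radialGain_self hα.ne' (hk_supp 1 (by simp))]
  set g := radialGain lam β α k
  obtain ⟨t₀, ⟨ht₀, ht₀α⟩, hgt₀, hg_lt⟩ :=
    exists_first_crossing hα.le (continuous_radialGain hk_cont).continuousOn hg₀ hgα
  have hlam_inv : 0 ≤ lam⁻¹ := inv_nonneg.2 (zero_le_one.trans hlam.le)
  have hnrm₀ (p : ℝ × ℝ) : 0 ≤ nrm p := hnrm p ▸ Real.sqrt_nonneg _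
  have hcontract (r : ℝ) (w : ℝ × ℝ) (hw : nrm w ≤ r) :
      nrm (F w) ≤ max (g r) lam⁻¹ * nrm w := by
    rw [hnrm w] at hw
    rw [hnrm (F w), hF w, hnrm w]
    exact sqrt_mul_sq_add_mul_sq_le_of_monotoneOn hg_nonneg hg_mono hlam_inv hw
  have hfactor_lt (r : ℝ) (hr₀ : 0 ≤ r) (hr : r < t₀) : max (g r) lam⁻¹ < 1 :=
    max_lt (hg_lt r ⟨hr₀, hr⟩) (inv_lt_one_of_one_lt₀ hlam)
  refine ⟨t₀, ⟨⟨⟨ht₀, ht₀α.le⟩, ?_⟩, fun t ⟨⟨ht, htα⟩, hht⟩ => ?_⟩, ht₀α,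
    fun z hz₀ hz => ?_, fun z hz => ?_⟩
  · rw [hh]; exact (mul_eq_right₀ ht₀.ne').2 hgt₀
  · rw [hh] at hht
    exact not_lt.1 fun htt₀ => (hg_lt t ⟨ht.le, htt₀⟩).ne ((mul_eq_right₀ ht.ne').1 hht)
  · exact (hcontract _ z le_rfl).trans_lt
      (mul_lt_of_lt_one_left hz₀ (hfactor_lt _ (hnrm₀ z) hz))
  · rw [← Prod.zero_eq_mk]
    exact tendsto_iterate_zero_of_contractOn
      (fun p => hnrm p ▸ Prod.norm_le_sqrt_sq_add_sq p) (le_max_of_le_right hlam_inv)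
      (hfactor_lt _ (hnrm₀ z) hz) (hcontract (nrm z)) le_rfl

/-- For the local model `F(x, y) = ((λ + β·k(‖(x,y)‖/α))·x, λ⁻¹·y)`
with `λ > 1`, `β ∈ (−λ, 1−λ)`, `α > 0` and `k` a continuous even unimodal bump
function (`k(0) = 1`, `k = 0` outside `[−1,1]`, `0 ≤ k ≤ 1`, nonincreasing on
`[0, ∞)`): (i) the equation `h(t) = t`, where `h(t) = (λ + β·k(t/α))·t`, has a least
solution `t₀` in `(0, α]`, and `t₀ < α`; (ii) `‖F(z)‖ < ‖z‖` for `0 < ‖z‖ < t₀`;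
(iii) every `z` with `‖z‖ < t₀` is attracted to the origin. -/
theorem attracting_fixed_point_local_model
    (lam β α : ℝ) (hlam : 1 < lam) (hβ : β ∈ Set.Ioo (-lam) (1 - lam)) (hα : 0 < α)
    (k : ℝ → ℝ) (hk_cont : Continuous k) (hk_even : ∀ t, k (-t) = k t) (hk0 : k 0 = 1)
    (hk_supp : ∀ t, 1 ≤ |t| → k t = 0)
    (hk_nonneg : ∀ t, 0 ≤ k t) (hk_le : ∀ t, k t ≤ 1)
    (hk_anti : AntitoneOn k (Set.Ici 0))
    (h : ℝ → ℝ) (hh : ∀ t, h t = (lam + β * k (t / α)) * t)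
    (F : ℝ × ℝ → ℝ × ℝ)
    (hF : ∀ p : ℝ × ℝ,
      F p = ((lam + β * k (Real.sqrt (p.1 ^ 2 + p.2 ^ 2) / α)) * p.1, lam⁻¹ * p.2))
    (nrm : ℝ × ℝ → ℝ) (hnrm : ∀ p : ℝ × ℝ, nrm p = Real.sqrt (p.1 ^ 2 + p.2 ^ 2)) :
    ∃ t₀ : ℝ, IsLeast {t ∈ Set.Ioc 0 α | h t = t} t₀ ∧ t₀ < α ∧
      (∀ z : ℝ × ℝ, 0 < nrm z → nrm z < t₀ → nrm (F z) < nrm z) ∧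
      (∀ z : ℝ × ℝ, nrm z < t₀ →
        Filter.Tendsto (fun m : ℕ => F^[m] z) Filter.atTop (nhds (0, 0))) :=
  attracting_fixed_point_local_model_general lam β α hlam hβ hα k hk_cont hk0 hk_supp hk_le hk_anti
    h hh F hF nrm hnrm
end
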